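/- arXiv:1210.6918 — 3 statements merged into one kernel-verified Lean document; each statement's English description precedes it below -/
import Mathlib

section
/- Let G = (V,E) be a finite simple graph, let S be the set of all simplicial vertices of G, and let A = {a_1,...,a_k} be a maximal independent set of the subgraph of G induced by S. Let w : V → ℝ be any weight function such that w(v) = w(N(v) ∩ A) for every v ∈ V \ A (where w of the empty set is 0). Then G is w-well-covered; moreover, every maximal independent set X of G satisfies w(X) = w(A). -/
namespace WC

variable {V : Type*}

/-- A set of vertices is independent if its elements are pairwise nonadjacent. -/
def IsIndep (G : SimpleGraph V) (S : Set V) : Prop :=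
  S.Pairwise fun a b => ¬ G.Adj a b

/-- A maximal independent set: independent and not properly contained in another
independent set. -/
def IsMaxIndep (G : SimpleGraph V) (S : Set V) : Prop :=
  IsIndep G S ∧ ∀ T : Set V, IsIndep G T → S ⊆ T → T = S

/-- A maximal independent set of the subgraph of `G` induced by `A`
(equivalently, a subset of `A`, independent in `G`, maximal among such). -/
def IsMaxIndepOn (G : SimpleGraph V) (A S : Set V) : Prop :=
  S ⊆ A ∧ IsIndep G S ∧ ∀ T : Set V, T ⊆ A → IsIndep G T → S ⊆ T → T = S

/-- The weight of a set of vertices: `w(S) = Σ_{s ∈ S} w(s)`. -/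
noncomputable def wsum (w : V → ℝ) (S : Set V) : ℝ := ∑ᶠ x ∈ S, w x

/-- `G` is `w`-well-covered if all maximal independent sets have the same weight. -/
def WWC (G : SimpleGraph V) (w : V → ℝ) : Prop :=
  ∀ S T : Set V, IsMaxIndep G S → IsMaxIndep G T → wsum w S = wsum w T

/-- `G` is well-covered if all maximal independent sets have the same cardinality. -/
def WellCovered (G : SimpleGraph V) : Prop :=
  ∀ S T : Set V, IsMaxIndep G S → IsMaxIndep G T → S.ncard = T.ncard

/-- `N(S)`, the set of vertices at distance exactly 1 from `S`. -/
def nbhd (G : SimpleGraph V) (S : Set V) : Set V :=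
  {x | x ∉ S ∧ ∃ s ∈ S, G.Adj x s}

/-- `N[S]`, the set of vertices at distance at most 1 from `S`. -/
def cnbhd (G : SimpleGraph V) (S : Set V) : Set V :=
  S ∪ {x | ∃ s ∈ S, G.Adj x s}

/-- `N₂(S)`, the set of vertices at distance exactly 2 from `S`. -/
def n2 (G : SimpleGraph V) (S : Set V) : Set V :=
  {x | x ∉ cnbhd G S ∧ ∃ y ∈ nbhd G S, G.Adj x y}

/-- `S` dominates `T` if `T ⊆ N[S]`. -/
def Dominates (G : SimpleGraph V) (S T : Set V) : Prop := T ⊆ cnbhd G S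

/-- `D(v) = N(v) \ N(N₂(v))`. -/
def dSet (G : SimpleGraph V) (v : V) : Set V :=
  G.neighborSet v \ nbhd G (n2 G {v})

/-- `L(G)`: vertices of degree 1, or of degree 2 lying on a triangle. -/
def lSet (G : SimpleGraph V) : Set V :=
  {v | (G.neighborSet v).ncard = 1 ∨
    ((G.neighborSet v).ncard = 2 ∧ ∃ a b, G.Adj v a ∧ G.Adj v b ∧ G.Adj a b)}

/-- `G` contains a cycle of length `k` as a (not necessarily induced) subgraph. -/
def HasCycleLen (G : SimpleGraph V) (k : ℕ) : Prop :=
  ∃ (u : V) (p : G.Walk u u), p.IsCycle ∧ p.length = k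

/-- A vertex is simplicial if its closed neighborhood induces a complete subgraph. -/
def Simplicial (G : SimpleGraph V) (v : V) : Prop :=
  ∀ a ∈ G.neighborSet v, ∀ b ∈ G.neighborSet v, a ≠ b → G.Adj a b

/-- `B` is an induced complete bipartite subgraph of `G` on (nonempty, disjoint)
parts `BX` and `BY`. -/
def IsCompleteBipartiteOn (G : SimpleGraph V) (BX BY : Set V) : Prop :=
  BX.Nonempty ∧ BY.Nonempty ∧ Disjoint BX BY ∧ IsIndep G BX ∧ IsIndep G BY ∧
    ∀ x ∈ BX, ∀ y ∈ BY, G.Adj x y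

/-- `B` (on parts `BX`, `BY`) is a generating subgraph of `G`: there is an
independent set `S` (a witness) such that `S ∪ BX` and `S ∪ BY` are both
maximal independent sets of `G`. -/
def IsGenerating (G : SimpleGraph V) (BX BY : Set V) : Prop :=
  ∃ S : Set V, IsIndep G S ∧ IsMaxIndep G (S ∪ BX) ∧ IsMaxIndep G (S ∪ BY)

/-- The edge `xy` is relating: there is an independent set `S` such that
`S ∪ {x}` and `S ∪ {y}` are both maximal independent sets of `G`. -/
def IsRelating (G : SimpleGraph V) (x y : V) : Prop :=
  G.Adj x y ∧ ∃ S : Set V, IsIndep G S ∧ IsMaxIndep G (S ∪ {x}) ∧ IsMaxIndep G (S ∪ {y})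

end WC

open WC

/-!
For a maximal independent set `X`, the sets `A ∩ N[x]`, `x ∈ X`, partition `A`: they cover `A`
because `X` is dominating, and they are disjoint because two vertices of `X` with a common
neighbour `a ∈ A` would be adjacent, `a` being simplicial. The hypothesis on `w` (together with
`A ∩ N[x] = {x}` for `x ∈ A`) says precisely that `w x = w (A ∩ N[x])` for every vertex `x`;
summing over `X` gives `w X = w A`.
-/

namespace WC

variable {V : Type*} {G : SimpleGraph V}

theorem IsIndep.insert_of_forall_not_adj {X : Set V} {a : V} (hX : IsIndep G X)
    (ha : ∀ x ∈ X, ¬ G.Adj a x) : IsIndep G (insert a X) := by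
  rintro u (rfl | hu) v (rfl | hv) huv
  · exact absurd rfl huv
  · exact ha v hv
  · exact fun h => ha u hu h.symm
  · exact hX hu hv huv

theorem IsMaxIndep.exists_adj_of_notMem {X : Set V} (hX : IsMaxIndep G X) {a : V}
    (haX : a ∉ X) : ∃ x ∈ X, G.Adj a x := by
  by_contra! h
  have := hX.2 _ (hX.1.insert_of_forall_not_adj h) (Set.subset_insert a X)
  exact haX (this ▸ Set.mem_insert a X)

theorem IsMaxIndep.biUnion_inter_closedNbhd {X : Set V} (hX : IsMaxIndep G X) (A : Set V) :
    ⋃ x ∈ X, A ∩ insert x (G.neighborSet x) = A := by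
  refine Set.Subset.antisymm (Set.iUnion₂_subset fun _ _ => Set.inter_subset_left) fun a ha => ?_
  by_cases haX : a ∈ X
  · exact Set.mem_biUnion haX ⟨ha, Set.mem_insert a _⟩
  · obtain ⟨x, hxX, hax⟩ := hX.exists_adj_of_notMem haX
    exact Set.mem_biUnion hxX ⟨ha, Set.mem_insert_of_mem _ hax.symm⟩

theorem IsIndep.pairwiseDisjoint_inter_closedNbhd {X A : Set V} (hX : IsIndep G X)
    (hA : ∀ a ∈ A, Simplicial G a) :
    X.PairwiseDisjoint fun x => A ∩ insert x (G.neighborSet x) := by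
  intro x hx y hy hxy
  rw [Function.onFun, Set.disjoint_left]
  rintro a ⟨haA, rfl | hxa⟩ ⟨-, rfl | hya⟩
  · exact hxy rfl
  · exact hX hx hy hxy hya.symm
  · exact hX hx hy hxy hxa
  · exact hX hx hy hxy (hA a haA x hxa.symm y hya.symm hxy)

theorem IsIndep.inter_closedNbhd_eq_singleton {A : Set V} (hA : IsIndep G A) {x : V}
    (hx : x ∈ A) : A ∩ insert x (G.neighborSet x) = {x} := by
  refine Set.Subset.antisymm ?_ (Set.singleton_subset_iff.mpr ⟨hx, Set.mem_insert x _⟩)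
  rintro a ⟨haA, rfl | hxa⟩
  · rfl
  · exact absurd hxa.symm (hA haA hx (G.ne_of_adj hxa).symm)

theorem wsum_inter_closedNbhd_eq {A : Set V} (hA : IsIndep G A) {w : V → ℝ}
    (hw : ∀ v : V, v ∉ A → w v = wsum w (G.neighborSet v ∩ A)) (x : V) :
    wsum w (A ∩ insert x (G.neighborSet x)) = w x := by
  by_cases hxA : x ∈ A
  · rw [hA.inter_closedNbhd_eq_singleton hxA, wsum, finsum_mem_singleton]
  · rw [hw x hxA, Set.inter_insert_of_notMem hxA, Set.inter_comm]

theorem IsMaxIndep.finsum_wsum_inter_closedNbhd [Finite V] {X A : Set V} (hX : IsMaxIndep G X)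
    (hA : ∀ a ∈ A, Simplicial G a) (w : V → ℝ) :
    ∑ᶠ x ∈ X, wsum w (A ∩ insert x (G.neighborSet x)) = wsum w A := by
  conv_rhs => rw [wsum, ← hX.biUnion_inter_closedNbhd A]
  exact (finsum_mem_biUnion (hX.1.pairwiseDisjoint_inter_closedNbhd hA) X.toFinite
    fun _ _ => Set.toFinite _).symm

end WC

/-- weights determined by a maximal independent set of the
simplicial vertices yield a `w`-well-covered graph. -/
theorem stmt_1 {V : Type*} [Fintype V] (G : SimpleGraph V) (w : V → ℝ) (A : Set V)
    (hA : IsMaxIndepOn G {v : V | Simplicial G v} A)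
    (hw : ∀ v : V, v ∉ A → w v = wsum w (G.neighborSet v ∩ A)) :
    WWC G w ∧ ∀ X : Set V, IsMaxIndep G X → wsum w X = wsum w A := by
  have weight_eq : ∀ X : Set V, IsMaxIndep G X → wsum w X = wsum w A := fun X hX => by
    rw [← hX.finsum_wsum_inter_closedNbhd (fun a ha => hA.1 ha) w]
    exact finsum_mem_congr rfl fun x _ => (wsum_inter_closedNbhd_eq hA.2.1 hw x).symm
  exact ⟨fun S T hS hT => (weight_eq S hS).trans (weight_eq T hT).symm, weight_eq⟩
end

section
/- Let G = (V,E) be a finite simple graph containing no cycle of length 5 (as a subgraph, not necessarily induced), and let v ∈ V. Then every maximal independent set of the subgraph of G induced by N_2(v) dominates N(v) ∩ N(N_2(v)). -/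
/-!
If `u ∈ N(v)` has a neighbour `x ∈ N₂(v)` but no neighbour in `T`, then `x ∉ T`, so by
maximality `x` has a neighbour `t ∈ T`. As `t ∈ N₂(v)`, it has a neighbour `y ∈ N(v)`, and
`v u x t y` is a 5-cycle: the distance conditions of `N₂(v)` make its vertices distinct.
-/

open WC SimpleGraph

namespace WC

variable {V : Type*} {G : SimpleGraph V}

lemma hasCycleLen_five {a b c d e : V} (hab : G.Adj a b) (hbc : G.Adj b c) (hcd : G.Adj c d)
    (hde : G.Adj d e) (hea : G.Adj e a) (hac : a ≠ c) (had : a ≠ d) (hbd : b ≠ d)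
    (hbe : b ≠ e) (hce : c ≠ e) : HasCycleLen G 5 := by
  refine ⟨a, .cons hab (.cons hbc (.cons hcd (.cons hde (.cons hea .nil)))), ?_, rfl⟩
  simp only [Walk.cons_isCycle_iff, Walk.cons_isPath_iff, Walk.isPath_iff_nil, Walk.support_cons,
    Walk.support_nil, Walk.edges_cons, Walk.edges_nil, List.mem_cons, List.not_mem_nil, Sym2.eq,
    Sym2.rel_iff']
  simp [hab.ne, hbc.ne, hcd.ne, hde.ne, hea.ne, hac, had, hbd, hbe, hce, hab.ne.symm,
    hea.ne.symm, hac.symm, had.symm]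

lemma mem_n2_singleton {v x : V} :
    x ∈ n2 G {v} ↔ x ≠ v ∧ ¬ G.Adj x v ∧ ∃ y, G.Adj x y ∧ G.Adj y v := by
  simp only [n2, cnbhd, nbhd, Set.mem_ofPred_eq, Set.mem_union, Set.mem_singleton_iff,
    exists_eq_left, not_or, and_assoc]
  exact and_congr_right' <| and_congr_right' ⟨fun ⟨y, _, hyv, hxy⟩ => ⟨y, hxy, hyv⟩,
    fun ⟨y, hxy, hyv⟩ => ⟨y, hyv.ne, hyv, hxy⟩⟩

lemma IsMaxIndepOn.exists_adj {A S : Set V} (hS : IsMaxIndepOn G A S) {x : V} (hxA : x ∈ A)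
    (hxS : x ∉ S) : ∃ s ∈ S, G.Adj x s := by
  obtain ⟨hSA, hSI, hSmax⟩ := hS
  by_contra! hx
  have hindep : IsIndep G (insert x S) :=
    hSI.insert fun s hsS _ => ⟨hx s hsS, fun hsx => hx s hsS hsx.symm⟩
  exact hxS (hSmax _ (Set.insert_subset hxA hSA) hindep (Set.subset_insert x S) ▸
    Set.mem_insert x S)

end WC

theorem stmt_4_general {V : Type*} (G : SimpleGraph V)
    (h5 : ¬ HasCycleLen G 5) (v : V) (T : Set V)
    (hT : IsMaxIndepOn G (n2 G {v}) T) :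
    Dominates G T (G.neighborSet v ∩ nbhd G (n2 G {v})) := by
  rintro u ⟨hvu, -, x, hx, hux⟩
  refine Or.inr (by_contra fun hu => h5 ?_)
  have huT : ∀ t ∈ T, ¬ G.Adj u t := fun t htT hut => hu ⟨t, htT, hut⟩
  obtain ⟨t, htT, hxt⟩ := hT.exists_adj hx fun hxT => huT x hxT hux
  obtain ⟨hxv, hxv', -⟩ := mem_n2_singleton.mp hx
  obtain ⟨htv, htv', y, hty, hyv⟩ := mem_n2_singleton.mp (hT.1 htT)
  exact hasCycleLen_five hvu hux hxt hty hyv hxv.symm htv.symm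
    (fun hut => htv' (hut ▸ hvu.symm)) (fun huy => huT t htT (huy ▸ hty.symm))
    (fun hxy => hxv' (hxy ▸ hyv))

/-- in a graph with no `C₅`, every maximal independent set of the
subgraph induced by `N₂(v)` dominates `N(v) ∩ N(N₂(v))`. -/
theorem stmt_4 {V : Type*} [Fintype V] (G : SimpleGraph V)
    (h5 : ¬ HasCycleLen G 5) (v : V) (T : Set V)
    (hT : IsMaxIndepOn G (n2 G {v}) T) :
    Dominates G T (G.neighborSet v ∩ nbhd G (n2 G {v})) :=
  stmt_4_general G h5 v T hT
end

section
/- Let G = (V,E) be a finite simple graph containing no cycle of length 5 (as a subgraph, not necessarily induced), and let v ∈ V. Then the subgraph of G induced by D(v) contains no path with 4 vertices (i.e., no path of length 3) as a subgraph; consequently, every connected component of the subgraph induced by D(v) is either a triangle K_3 or a star (where K_1 and K_2 are regarded as stars). -/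
namespace WC

open SimpleGraph

variable {V : Type*}

theorem hasCycleLen_five_of_path {G : SimpleGraph V} {v a b c d : V}
    (hva : G.Adj v a) (hab : G.Adj a b) (hbc : G.Adj b c) (hcd : G.Adj c d) (hdv : G.Adj d v)
    (hvb : v ≠ b) (hvc : v ≠ c) (hac : a ≠ c) (had : a ≠ d) (hbd : b ≠ d) :
    HasCycleLen G 5 := by
  refine ⟨v, .cons hva (.cons hab (.cons hbc (.cons hcd (.cons hdv .nil)))), ?_, rfl⟩
  simp [Walk.cons_isCycle_iff, hab.ne, hbc.ne, hcd.ne, hdv.ne, hva.ne, hac, had, hbd, hvb, hvc,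
    hvb.symm, hvc.symm, hva.ne.symm, hdv.ne.symm]

variable {H : SimpleGraph V}

def IsP4Free (H : SimpleGraph V) : Prop :=
  ∀ ⦃a b c d : V⦄, H.Adj a b → H.Adj b c → H.Adj c d → a ≠ c → b ≠ d → a ≠ d → False

theorem IsP4Free.eq_or_adj_or_exists_of_isPath (hH : IsP4Free H) {x y : V} :
    ∀ p : H.Walk x y, p.IsPath → x = y ∨ H.Adj x y ∨ ∃ m, H.Adj x m ∧ H.Adj m y
  | .nil, _ => .inl rfl
  | .cons h .nil, _ => .inr (.inl h)
  | .cons h (.cons h' .nil), _ => .inr (.inr ⟨_, h, h'⟩)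
  | .cons h (.cons h' (.cons h'' q)), hp => by
    exfalso
    simp only [Walk.cons_isPath_iff, Walk.support_cons, List.mem_cons, not_or] at hp
    obtain ⟨⟨-, -, hbd⟩, -, hac, had⟩ := hp
    have hd := q.start_mem_support
    exact hH h h' h'' hac (ne_of_mem_of_not_mem hd hbd).symm (ne_of_mem_of_not_mem hd had).symm

theorem IsP4Free.eq_or_adj_or_exists_of_reachable (hH : IsP4Free H) {x y : V}
    (h : H.Reachable x y) : x = y ∨ H.Adj x y ∨ ∃ m, H.Adj x m ∧ H.Adj m y := by
  classical
  obtain ⟨p⟩ := h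
  exact hH.eq_or_adj_or_exists_of_isPath p.toPath p.toPath.2

theorem IsP4Free.adj_or_adj_of_reachable (hH : IsP4Free H) {p q x : V} (hpq : H.Adj p q)
    (hreach : H.Reachable x p) (hxp : x ≠ p) (hxq : x ≠ q) : H.Adj x p ∨ H.Adj x q := by
  obtain rfl | hxp' | ⟨m, hxm, hmp⟩ := hH.eq_or_adj_or_exists_of_reachable hreach
  · exact absurd rfl hxp
  · exact .inl hxp'
  · obtain rfl | hmq := eq_or_ne m q
    · exact .inr hxm
    · exact (hH hxm hmp hpq hxp hmq hxq).elim

variable {C : H.ConnectedComponent}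

theorem IsP4Free.supp_eq_of_triangle (hH : IsP4Free H) {a b c : V} (ha : a ∈ C.supp)
    (hab : H.Adj a b) (hac : H.Adj a c) (hbc : H.Adj b c) : C.supp = {a, b, c} := by
  have hb := C.mem_supp_of_adj_mem_supp ha hab
  have hc := C.mem_supp_of_adj_mem_supp ha hac
  refine Set.Subset.antisymm (fun x hx => ?_) (by simp [Set.insert_subset_iff, ha, hb, hc])
  by_contra! hx'
  simp only [Set.mem_insert_iff, Set.mem_singleton_iff, not_or] at hx'
  obtain ⟨hxa, hxb, hxc⟩ := hx'
  rcases hH.adj_or_adj_of_reachable hab (C.reachable_of_mem_supp hx ha) hxa hxb with hxa' | hxb'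
  · exact hH hxa' hab hbc hxb hac.ne hxc
  · exact hH hxb' hab.symm hac hxa hbc.ne hxc

theorem IsP4Free.exists_dominating_of_adj (hH : IsP4Free H) {p q : V} (hp : p ∈ C.supp)
    (hpq : H.Adj p q) : ∃ c ∈ C.supp, ∀ x ∈ C.supp, x ≠ c → H.Adj c x := by
  have hq := C.mem_supp_of_adj_mem_supp hp hpq
  have hpq' : ∀ x ∈ C.supp, x ≠ p → x ≠ q → H.Adj x p ∨ H.Adj x q := fun x hx =>
    hH.adj_or_adj_of_reachable hpq (C.reachable_of_mem_supp hx hp)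
  by_cases hleaf : ∃ y ∈ C.supp, y ≠ p ∧ y ≠ q ∧ H.Adj y q
  · obtain ⟨y, -, hyp, hyq, hyq'⟩ := hleaf
    refine ⟨q, hq, fun x hx hxq => ?_⟩
    obtain rfl | hxp := eq_or_ne x p
    · exact hpq.symm
    obtain hxp' | hxq' := hpq' x hx hxp hxq
    · obtain rfl | hxy := eq_or_ne x y
      · exact hyq'.symm
      · exact (hH hxp' hpq hyq'.symm hxq hyp.symm hxy).elim
    · exact hxq'.symm
  · push Not at hleaf
    refine ⟨p, hp, fun x hx hxp => ?_⟩
    obtain rfl | hxq := eq_or_ne x q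
    · exact hpq
    exact ((hpq' x hx hxp hxq).resolve_right (hleaf x hx hxp hxq)).symm

theorem IsP4Free.supp_eq_triangle_or_isStar (hH : IsP4Free H) (C : H.ConnectedComponent) :
    (∃ a b c : V, a ≠ b ∧ a ≠ c ∧ b ≠ c ∧ H.Adj a b ∧ H.Adj a c ∧ H.Adj b c ∧
      C.supp = {a, b, c}) ∨
    (∃ c ∈ C.supp, (∀ x ∈ C.supp, x ≠ c → H.Adj c x) ∧
      ∀ x ∈ C.supp, ∀ y ∈ C.supp, H.Adj x y → x = c ∨ y = c) := by
  by_cases htri : ∃ a b c : V, a ∈ C.supp ∧ H.Adj a b ∧ H.Adj a c ∧ H.Adj b c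
  · obtain ⟨a, b, c, ha, hab, hac, hbc⟩ := htri
    exact .inl ⟨a, b, c, hab.ne, hac.ne, hbc.ne, hab, hac, hbc,
      hH.supp_eq_of_triangle ha hab hac hbc⟩
  push Not at htri
  refine .inr ?_
  by_cases hedge : ∃ p q : V, p ∈ C.supp ∧ H.Adj p q
  · obtain ⟨p, q, hp, hpq⟩ := hedge
    obtain ⟨c, hc, hdom⟩ := hH.exists_dominating_of_adj hp hpq
    refine ⟨c, hc, hdom, fun x hx y hy hxy => ?_⟩
    by_contra! hxy'
    exact htri c x y hc (hdom x hx hxy'.1) (hdom y hy hxy'.2) hxy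
  · push Not at hedge
    obtain ⟨c, hc⟩ := C.nonempty_supp
    refine ⟨c, hc, fun x hx hxc => ?_, fun x hx y _ hxy => (hedge x y hx hxy).elim⟩
    obtain rfl | hxc' | ⟨m, hxm, -⟩ :=
      hH.eq_or_adj_or_exists_of_reachable (C.reachable_of_mem_supp hx hc)
    · exact absurd rfl hxc
    · exact (hedge x c hx hxc').elim
    · exact (hedge x m hx hxm).elim

end WC

open WC

theorem stmt_6_general {V : Type*} (G : SimpleGraph V)
    (h5 : ¬ HasCycleLen G 5) (v : V) :
    (¬ ∃ a b c d : V, a ∈ dSet G v ∧ b ∈ dSet G v ∧ c ∈ dSet G v ∧ d ∈ dSet G v ∧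
      a ≠ b ∧ a ≠ c ∧ a ≠ d ∧ b ≠ c ∧ b ≠ d ∧ c ≠ d ∧
      G.Adj a b ∧ G.Adj b c ∧ G.Adj c d) ∧
    (∀ C : (G.induce (dSet G v)).ConnectedComponent,
      (∃ a b c : dSet G v, a ≠ b ∧ a ≠ c ∧ b ≠ c ∧
        G.Adj (a : V) (b : V) ∧ G.Adj (a : V) (c : V) ∧ G.Adj (b : V) (c : V) ∧
        C.supp = {a, b, c}) ∨
      (∃ c ∈ C.supp, (∀ x ∈ C.supp, x ≠ c → G.Adj (c : V) (x : V)) ∧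
        ∀ x ∈ C.supp, ∀ y ∈ C.supp, G.Adj (x : V) (y : V) → x = c ∨ y = c)) := by
  have hP4 : ¬ ∃ a b c d : V, a ∈ dSet G v ∧ b ∈ dSet G v ∧ c ∈ dSet G v ∧ d ∈ dSet G v ∧
      a ≠ b ∧ a ≠ c ∧ a ≠ d ∧ b ≠ c ∧ b ≠ d ∧ c ≠ d ∧
      G.Adj a b ∧ G.Adj b c ∧ G.Adj c d := by
    rintro ⟨a, b, c, d, ha, hb, hc, hd, -, hac, had, -, hbd, -, hab, hbc, hcd⟩
    exact h5 (hasCycleLen_five_of_path ha.1 hab hbc hcd hd.1.symm hb.1.ne hc.1.ne hac had hbd)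
  have hD : IsP4Free (G.induce (dSet G v)) := fun a b c d hab hbc hcd hac hbd had =>
    hP4 ⟨a, b, c, d, a.2, b.2, c.2, d.2, G.ne_of_adj hab, Subtype.coe_injective.ne hac,
      Subtype.coe_injective.ne had, G.ne_of_adj hbc, Subtype.coe_injective.ne hbd,
      G.ne_of_adj hcd, hab, hbc, hcd⟩
  exact ⟨hP4, hD.supp_eq_triangle_or_isStar⟩

/-- in a graph with no `C₅`, the subgraph induced by `D(v)` contains
no path on 4 vertices; consequently every connected component of that induced
subgraph is a triangle `K₃` or a star (with `K₁`, `K₂` regarded as stars). -/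
theorem stmt_6 {V : Type*} [Fintype V] (G : SimpleGraph V)
    (h5 : ¬ HasCycleLen G 5) (v : V) :
    (¬ ∃ a b c d : V, a ∈ dSet G v ∧ b ∈ dSet G v ∧ c ∈ dSet G v ∧ d ∈ dSet G v ∧
      a ≠ b ∧ a ≠ c ∧ a ≠ d ∧ b ≠ c ∧ b ≠ d ∧ c ≠ d ∧
      G.Adj a b ∧ G.Adj b c ∧ G.Adj c d) ∧
    (∀ C : (G.induce (dSet G v)).ConnectedComponent,
      (∃ a b c : dSet G v, a ≠ b ∧ a ≠ c ∧ b ≠ c ∧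
        G.Adj (a : V) (b : V) ∧ G.Adj (a : V) (c : V) ∧ G.Adj (b : V) (c : V) ∧
        C.supp = {a, b, c}) ∨
      (∃ c ∈ C.supp, (∀ x ∈ C.supp, x ≠ c → G.Adj (c : V) (x : V)) ∧
        ∀ x ∈ C.supp, ∀ y ∈ C.supp, G.Adj (x : V) (y : V) → x = c ∨ y = c)) :=
  stmt_6_general G h5 v
end
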